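/- arXiv:2205.11297 — 2 statements merged into one kernel-verified Lean document; each statement's English description precedes it below -/
import Mathlib

section
/- For every lower triangular real matrix T of size r with positive diagonal entries, every complex symmetric r×r matrix w, and every s = (s₁,…,s_r) ∈ ℂʳ, the generalized power function satisfies Δ_s(T w Tᵀ) = (T₁₁^{2s₁} T₂₂^{2s₂} ⋯ T_{rr}^{2s_r}) · Δ_s(w). -/
open Matrix BigOperators Complex

/-- The `k`-th leading principal minor of an `r × r` complex matrix (`k ≤ r`). -/
noncomputable def leadingMinor {r : ℕ} (w : Matrix (Fin r) (Fin r) ℂ) (k : ℕ) (h : k ≤ r) : ℂ :=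
  (w.submatrix (fun i : Fin k => Fin.castLE h i) (fun i : Fin k => Fin.castLE h i)).det

/-- The generalized power function
`Δ_s(w) = Δ₁(w)^{s₁} ∏_{k=2}^r (Δ_k(w)/Δ_{k-1}(w))^{s_k}` (principal branch). -/
noncomputable def genPower {r : ℕ} (w : Matrix (Fin r) (Fin r) ℂ) (s : Fin r → ℂ) : ℂ :=
  ∏ k : Fin r,
    (leadingMinor w (k.1 + 1) k.isLt / leadingMinor w k.1 (le_of_lt k.isLt)) ^ (s k)

private lemma sum_castLE_aux {r k : ℕ} (h : k ≤ r) (g : Fin r → ℂ)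
    (hg : ∀ a : Fin r, k ≤ a.1 → g a = 0) :
    ∑ a : Fin r, g a = ∑ a : Fin k, g (Fin.castLE h a) := by
  classical
  have hsub : ((Finset.univ : Finset (Fin k)).map (Fin.castLEEmb h)) ⊆
      (Finset.univ : Finset (Fin r)) := Finset.subset_univ _
  have := Finset.sum_subset hsub (fun x _ hx => by
    apply hg
    by_contra hc
    push_neg at hc
    exact hx (Finset.mem_map.2 ⟨⟨x.1, hc⟩, Finset.mem_univ _, by
      simp [Fin.castLEEmb, Fin.ext_iff]⟩))
  rw [← this, Finset.sum_map]
  simp [Fin.castLEEmb]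

private lemma submatrix_conj {r k : ℕ} (h : k ≤ r) (T' w : Matrix (Fin r) (Fin r) ℂ)
    (hT : ∀ i j : Fin r, i < j → T' i j = 0) :
    (T' * w * T'ᵀ).submatrix (fun i : Fin k => Fin.castLE h i) (fun i : Fin k => Fin.castLE h i)
      = (T'.submatrix (fun i : Fin k => Fin.castLE h i) (fun i : Fin k => Fin.castLE h i))
        * (w.submatrix (fun i : Fin k => Fin.castLE h i) (fun i : Fin k => Fin.castLE h i))
        * (T'.submatrix (fun i : Fin k => Fin.castLE h i) (fun i : Fin k => Fin.castLE h i))ᵀ := by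
  ext i j
  simp only [Matrix.submatrix_apply, Matrix.mul_apply, Matrix.transpose_apply]
  rw [sum_castLE_aux h
      (fun b => (∑ a : Fin r, T' (Fin.castLE h i) a * w a b) * T' (Fin.castLE h j) b)
      (fun b hb => by
        rw [hT _ _ (show Fin.castLE h j < b by
          simp only [Fin.lt_def, Fin.coe_castLE]
          exact lt_of_lt_of_le j.isLt hb), mul_zero])]
  apply Finset.sum_congr rfl
  intro b _
  congr 1
  rw [sum_castLE_aux h (fun a => T' (Fin.castLE h i) a * w a (Fin.castLE h b))
      (fun a ha => by
        rw [hT _ _ (show Fin.castLE h i < a by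
          simp only [Fin.lt_def, Fin.coe_castLE]
          exact lt_of_lt_of_le i.isLt ha), zero_mul])]

private lemma leadingMinor_conj {r k : ℕ} (h : k ≤ r) (T' w : Matrix (Fin r) (Fin r) ℂ)
    (hT : ∀ i j : Fin r, i < j → T' i j = 0) :
    leadingMinor (T' * w * T'ᵀ) k h
      = (∏ i : Fin k, T' (Fin.castLE h i) (Fin.castLE h i)) ^ 2 * leadingMinor w k h := by
  unfold leadingMinor
  rw [submatrix_conj h T' w hT, Matrix.det_mul, Matrix.det_mul, Matrix.det_transpose]
  have hdet : (T'.submatrix (fun i : Fin k => Fin.castLE h i)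
      (fun i : Fin k => Fin.castLE h i)).det
      = ∏ i : Fin k, T' (Fin.castLE h i) (Fin.castLE h i) := by
    apply Matrix.det_of_lowerTriangular
    intro i j hij
    have hij' : i < j := hij
    exact hT _ _ (by simp only [Fin.lt_def, Fin.coe_castLE]; exact hij')
  rw [hdet]
  ring

private lemma cpow_pos_sq_mul {t : ℝ} (ht : 0 < t) {z : ℂ} (hz : z ≠ 0) (s : ℂ) :
    (((t : ℂ)) ^ 2 * z) ^ s = ((t : ℂ)) ^ (2 * s) * z ^ s := by
  have ht2 : (0 : ℝ) < t ^ 2 := by positivity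
  have h1 : ((t : ℂ)) ^ 2 = ((t ^ 2 : ℝ) : ℂ) := by push_cast; ring
  have htne : ((t : ℂ)) ≠ 0 := by exact_mod_cast ht.ne'
  have ht2ne : (((t ^ 2 : ℝ) : ℂ)) ≠ 0 := by exact_mod_cast ht2.ne'
  rw [h1, Complex.cpow_def_of_ne_zero (mul_ne_zero ht2ne hz),
    Complex.log_ofReal_mul ht2 hz, Complex.cpow_def_of_ne_zero hz,
    Complex.cpow_def_of_ne_zero htne, ← Complex.exp_add]
  congr 1
  rw [show Complex.log ((t : ℂ)) = ((Real.log t : ℝ) : ℂ) from (Complex.ofReal_log ht.le).symm,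
    show Real.log (t ^ 2) = 2 * Real.log t by rw [Real.log_pow]; push_cast; ring]
  push_cast
  ring

/-- For `T` real lower triangular with positive diagonal, `w` complex symmetric with
nonvanishing leading principal minors, and `s ∈ ℂʳ`,
`Δ_s(T w Tᵀ) = (T₁₁^{2s₁} ⋯ T_rr^{2s_r}) Δ_s(w)`. -/
theorem genPower_triangular_transform (r : ℕ)
    (T : Matrix (Fin r) (Fin r) ℝ)
    (hlow : ∀ i j : Fin r, i < j → T i j = 0)
    (hdiag : ∀ i : Fin r, 0 < T i i)
    (w : Matrix (Fin r) (Fin r) ℂ) (hw : w.IsSymm)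
    (hmin : ∀ (k : ℕ) (h : k ≤ r), leadingMinor w k h ≠ 0)
    (s : Fin r → ℂ) :
    genPower ((T.map (Complex.ofReal)) * w * (T.map (Complex.ofReal))ᵀ) s
      = (∏ k : Fin r, ((T k k : ℂ)) ^ (2 * s k)) * genPower w s := by
  set T' : Matrix (Fin r) (Fin r) ℂ := T.map Complex.ofReal with hT'
  have hT'low : ∀ i j : Fin r, i < j → T' i j = 0 := by
    intro i j hij
    simp [hT', Matrix.map_apply, hlow i j hij]
  unfold genPower
  rw [← Finset.prod_mul_distrib]
  apply Finset.prod_congr rfl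
  intro k _
  -- the diagonal product over `Fin k.1` and `Fin (k.1+1)`
  have hdiag' : ∀ (m : ℕ) (hm : m ≤ r) (i : Fin m),
      T' (Fin.castLE hm i) (Fin.castLE hm i) = ((T (Fin.castLE hm i) (Fin.castLE hm i) : ℝ) : ℂ) :=
    fun m hm i => rfl
  set Pk : ℂ := ∏ i : Fin k.1, T' (Fin.castLE (le_of_lt k.isLt) i) (Fin.castLE (le_of_lt k.isLt) i)
    with hPk
  have hPk1 : (∏ i : Fin (k.1 + 1), T' (Fin.castLE k.isLt i) (Fin.castLE k.isLt i))
      = Pk * ((T k k : ℝ) : ℂ) := by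
    rw [Fin.prod_univ_castSucc]
    have e1 : ∀ i : Fin k.1, Fin.castLE k.isLt i.castSucc = Fin.castLE (le_of_lt k.isLt) i :=
      fun i => Fin.ext (by simp)
    have e2 : Fin.castLE k.isLt (Fin.last k.1) = k := Fin.ext (by simp)
    simp only [e1, e2, hPk, hT', Matrix.map_apply]
  have hPkne : Pk ≠ 0 := by
    rw [hPk]
    apply Finset.prod_ne_zero_iff.2
    intro i _
    simp only [hT', Matrix.map_apply]
    exact_mod_cast (hdiag _).ne'
  have hm1 := hmin (k.1 + 1) k.isLt
  have hm0 := hmin k.1 (le_of_lt k.isLt)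
  have hratio : leadingMinor (T' * w * T'ᵀ) (k.1 + 1) k.isLt
        / leadingMinor (T' * w * T'ᵀ) k.1 (le_of_lt k.isLt)
      = ((T k k : ℝ) : ℂ) ^ 2 *
        (leadingMinor w (k.1 + 1) k.isLt / leadingMinor w k.1 (le_of_lt k.isLt)) := by
    rw [leadingMinor_conj k.isLt T' w hT'low,
      leadingMinor_conj (le_of_lt k.isLt) T' w hT'low, hPk1]
    rw [← hPk]
    field_simp
    try ring
  rw [hratio, cpow_pos_sq_mul (hdiag k) (div_ne_zero hm1 hm0)]
end

section
/- Let Φ = (φ₁,…,φ_l) be holomorphic on a connected open set D ⊆ ℂ with φ₁,…,φ_l algebraically independent over the field of rational functions on D. Suppose G(z,X) is a Nash algebraic function on a neighborhood of the graph {(z,Φ(z)) : z ∈ D} such that G(z,Φ(z)) ≡ 0 on D. Then G(z,X) ≡ 0 identically on a neighborhood of the graph. -/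
open Complex BigOperators

/-- A holomorphic function of several complex variables is Nash algebraic on `V` if it
satisfies a nontrivial polynomial identity with polynomial coefficients. -/
def NashAlgebraicOnMv {m : ℕ} (V : Set (Fin m → ℂ)) (G : (Fin m → ℂ) → ℂ) : Prop :=
  AnalyticOn ℂ G V ∧
    ∃ P : Polynomial (MvPolynomial (Fin m) ℂ), P ≠ 0 ∧
      ∀ x ∈ V, Polynomial.eval₂ (MvPolynomial.eval x) (G x) P = 0

/-- `φ₁,…,φ_l` are algebraically independent over the rational functions on `D`:
no nonzero polynomial `Q(z, X₁,…,X_l)` satisfies `Q(z, φ₁(z),…,φ_l(z)) ≡ 0`. -/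
def AlgIndepOverRat {l : ℕ} (D : Set ℂ) (Φ : ℂ → (Fin l → ℂ)) : Prop :=
  ∀ Q : MvPolynomial (Fin (l + 1)) ℂ,
    (∀ z ∈ D, MvPolynomial.eval (Fin.cons z (Φ z)) Q = 0) → Q = 0

/-!
If `G ≢ 0` satisfies `P(x, G(x)) = 0` on a connected open set, write `P = Yᵏ Q` with
`Q(x, 0) ≢ 0`. Where `G ≠ 0` this forces `Q(x, G(x)) = 0`, and by the identity theorem
`Q(x, G(x)) = 0` everywhere. On the graph of `Φ`, where `G` vanishes, this reads
`Q(z, Φ(z), 0) = 0`, a polynomial relation between `z` and the `φⱼ` with nonzero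
polynomial `Q(·, 0)`, contradicting algebraic independence.
-/

section

variable {𝕜 : Type*} [NontriviallyNormedField 𝕜] [CompleteSpace 𝕜] {σ : Type*} [Fintype σ]

open Polynomial

theorem AnalyticOnNhd.eval₂_mvPolynomial_eval {G : (σ → 𝕜) → 𝕜} {s : Set (σ → 𝕜)}
    (hG : AnalyticOnNhd 𝕜 G s) (Q : (MvPolynomial σ 𝕜)[X]) :
    AnalyticOnNhd 𝕜 (fun x ↦ Q.eval₂ (MvPolynomial.eval x) (G x)) s := by
  induction Q using Polynomial.induction_on' with
  | add p q hp hq => simp only [eval₂_add]; exact hp.add hq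
  | monomial n a =>
    simp only [eval₂_monomial]
    exact ((AnalyticOnNhd.eval_mvPolynomial a).mono (Set.subset_univ s)).mul (hG.pow n)

theorem exists_coeff_zero_ne_zero_and_eval₂_eq_zero {V : Set (σ → 𝕜)} (hV : IsOpen V)
    (hVc : IsPreconnected V) {G : (σ → 𝕜) → 𝕜} (hG : AnalyticOnNhd 𝕜 G V)
    {P : (MvPolynomial σ 𝕜)[X]} (hP : P ≠ 0)
    (hPG : ∀ x ∈ V, P.eval₂ (MvPolynomial.eval x) (G x) = 0)
    {x₀ : σ → 𝕜} (hx₀ : x₀ ∈ V) (hGx₀ : G x₀ ≠ 0) :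
    ∃ Q : (MvPolynomial σ 𝕜)[X], Q.coeff 0 ≠ 0 ∧
      ∀ x ∈ V, Q.eval₂ (MvPolynomial.eval x) (G x) = 0 := by
  obtain ⟨Q, hPQ, hXQ⟩ := P.exists_eq_pow_rootMultiplicity_mul_and_not_dvd hP 0
  rw [map_zero, sub_zero, X_dvd_iff] at hXQ
  refine ⟨Q, hXQ, fun x hx ↦ ?_⟩
  have hQG_near : (fun x ↦ Q.eval₂ (MvPolynomial.eval x) (G x)) =ᶠ[nhds x₀] 0 := by
    filter_upwards [(hG x₀ hx₀).continuousAt.eventually_ne hGx₀, hV.mem_nhds hx₀]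
      with y hGy hy
    have hPy := hPG y hy
    rw [hPQ, map_zero, sub_zero, eval₂_mul, eval₂_pow, eval₂_X] at hPy
    exact (mul_eq_zero.mp hPy).resolve_left (pow_ne_zero _ hGy)
  exact (hG.eval₂_mvPolynomial_eval Q).eqOn_zero_of_preconnected_of_eventuallyEq_zero
    hVc hx₀ hQG_near hx

end

theorem nash_vanishing_on_graph_general (l : ℕ)
    (D : Set ℂ)
    (Φ : ℂ → (Fin l → ℂ))
    (hindep : AlgIndepOverRat D Φ)
    (V : Set (Fin (l + 1) → ℂ)) (hV : IsOpen V) (hVc : IsConnected V)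
    (hgraph : ∀ z ∈ D, Fin.cons z (Φ z) ∈ V)
    (G : (Fin (l + 1) → ℂ) → ℂ) (hG : NashAlgebraicOnMv V G)
    (hvanish : ∀ z ∈ D, G (Fin.cons z (Φ z)) = 0) :
    ∀ x ∈ V, G x = 0 := by
  obtain ⟨hGa, P, hP, hPG⟩ := hG
  by_contra! ⟨x₀, hx₀, hGx₀⟩
  obtain ⟨Q, hQ0, hQG⟩ := exists_coeff_zero_ne_zero_and_eval₂_eq_zero hV hVc.isPreconnected
    (hV.analyticOn_iff_analyticOnNhd.mp hGa) hP hPG hx₀ hGx₀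
  refine hQ0 (hindep _ fun z hz ↦ ?_)
  simpa only [hvanish z hz, Polynomial.eval₂_at_zero] using hQG _ (hgraph z hz)

/-- If `G(z,X)` is Nash algebraic on a connected neighborhood `V` of the graph of
`Φ = (φ₁,…,φ_l)`, the `φ_j` are algebraically independent over the rational functions
on the connected open set `D`, and `G(z,Φ(z)) ≡ 0` on `D`, then `G ≡ 0` on `V`. -/
theorem nash_vanishing_on_graph (l : ℕ)
    (D : Set ℂ) (hD : IsOpen D) (hDc : IsConnected D)
    (Φ : ℂ → (Fin l → ℂ)) (hΦ : AnalyticOn ℂ Φ D)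
    (hindep : AlgIndepOverRat D Φ)
    (V : Set (Fin (l + 1) → ℂ)) (hV : IsOpen V) (hVc : IsConnected V)
    (hgraph : ∀ z ∈ D, Fin.cons z (Φ z) ∈ V)
    (G : (Fin (l + 1) → ℂ) → ℂ) (hG : NashAlgebraicOnMv V G)
    (hvanish : ∀ z ∈ D, G (Fin.cons z (Φ z)) = 0) :
    ∀ x ∈ V, G x = 0 :=
  nash_vanishing_on_graph_general l D Φ hindep V hV hVc hgraph G hG hvanish
end
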